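/- Let A₁ and A₂ be unital associative ℂ-algebras and let U be an irreducible A₁ ⊗ A₂-module. Suppose that U, viewed as an A₁-module via a₁ ↦ a₁ ⊗ 1, has an irreducible A₁-submodule U₁, and assume that either A₁ has countable dimension over ℂ or every A₁-module endomorphism of U₁ is a scalar multiple of the identity. Then there exists an irreducible A₂-module U₂ such that U is isomorphic, as an A₁ ⊗ A₂-module, to U₁ ⊗ U₂. -/

import Mathlib

/-!
`U` is recovered as `U₁ ⊗ Hom_{A₁}(U₁, U)` through the evaluation map `x ⊗ f ↦ f x`, where `A₂`
acts on the multiplicity space `Hom_{A₁}(U₁, U)` by composing with `ρ (1 ⊗ a₂)`. The evaluation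
map intertwines the two `A₁ ⊗ A₂`-actions, so its image is all of `U`. It is injective because,
once `End_{A₁}(U₁) = ℂ`, linearly independent intertwiners `U₁ → U` have independent images
(a density argument by induction on their number). An `A₂`-submodule `S` of the multiplicity
space yields the submodule `U₁ ⊗ S` of `U ≅ U₁ ⊗ Hom_{A₁}(U₁, U)`, which is why the multiplicity
space is irreducible. For `A₁` of countable dimension, `End_{A₁}(U₁) = ℂ` is Dixmier's lemma.
-/

open scoped TensorProduct

noncomputable section
namespace Twisted

/-- `U` (with representation `ρ`) is an irreducible `A`-module. -/
def AIrred (A : Type) [Ring A] [Algebra ℂ A] (U : Type) [AddCommGroup U] [Module ℂ U]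
    (ρ : A →ₐ[ℂ] Module.End ℂ U) : Prop :=
  Nontrivial U ∧ ∀ S : Submodule ℂ U, (∀ a : A, ∀ x ∈ S, ρ a x ∈ S) → S = ⊥ ∨ S = ⊤

/-- `A` has countable dimension over `ℂ` (a countable basis). -/
def CountableDim (A : Type) [Ring A] [Algebra ℂ A] : Prop :=
  ∃ ι : Type, Countable ι ∧ Nonempty (Module.Basis ι ℂ A)

open Polynomial Cardinal

section Resolvent

variable {K V : Type*} [Field K] [IsAlgClosed K] [AddCommGroup V] [Module K V]

theorem isUnit_aeval_of_spectrum_eq_empty {A : Type*} [Ring A] [Algebra K A] {a : A}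
    (ha : spectrum K a = ∅) {p : K[X]} (hp : p ≠ 0) : IsUnit (aeval a p) := by
  rcases le_or_gt p.degree 0 with hdeg | hdeg
  · rw [eq_C_of_degree_le_zero hdeg, aeval_C]
    refine (IsUnit.mk0 _ fun h => hp ?_).map (algebraMap K A)
    rw [eq_C_of_degree_le_zero hdeg, h, C_0]
  · rw [← spectrum.zero_notMem_iff K, spectrum.map_polynomial_aeval_of_degree_pos a p hdeg, ha,
      Set.image_empty]
    exact Set.notMem_empty 0

/-- A linear relation among the resolvent vectors, multiplied by `∏ (c - g)`, becomes
`q(g) x = 0` for a nonzero polynomial `q`; but `q(g)` is invertible as `g` has empty spectrum. -/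
theorem linearIndependent_resolvent_apply {g : Module.End K V} (hg : spectrum K g = ∅) {x : V}
    (hx : x ≠ 0) : LinearIndependent K fun c : K => Ring.inverse (algebraMap K _ c - g) x := by
  classical
  have hunit (c : K) : IsUnit (algebraMap K _ c - g) := by
    by_contra h
    exact (Set.eq_empty_iff_forall_notMem.mp hg) c h
  rw [linearIndependent_iff']
  intro s l hl c₀ hc₀
  by_contra hl₀
  set q : K[X] := ∑ c ∈ s, C (l c) * ∏ c' ∈ s.erase c, (C c' - X)
  have hq : q.eval c₀ ≠ 0 := by
    rw [eval_finsetSum, Finset.sum_eq_single c₀]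
    · simp only [eval_mul, eval_C, eval_prod, eval_sub, eval_X]
      exact mul_ne_zero hl₀ (Finset.prod_ne_zero_iff.mpr fun c' hc' =>
        sub_ne_zero.mpr (Finset.ne_of_mem_erase hc'))
    · intro c _ hc
      simp [eval_prod, Finset.prod_eq_zero (Finset.mem_erase.mpr ⟨Ne.symm hc, hc₀⟩)]
    · exact fun h => absurd hc₀ h
  have hqx : aeval g q x = 0 := by
    have hfactor (c) (hc : c ∈ s) :
        aeval g (∏ c' ∈ s, (C c' - X)) (Ring.inverse (algebraMap K _ c - g) x) =
          aeval g (∏ c' ∈ s.erase c, (C c' - X)) x := by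
      rw [← Finset.prod_erase_mul s _ hc, map_mul, map_sub, aeval_C, aeval_X,
        ← Module.End.mul_apply, mul_assoc, Ring.mul_inverse_cancel _ (hunit c), mul_one]
    calc aeval g q x
        = aeval g (∏ c' ∈ s, (C c' - X))
            (∑ c ∈ s, l c • Ring.inverse (algebraMap K _ c - g) x) := by
          simp only [q, map_sum, LinearMap.sum_apply, map_mul, aeval_C, Module.End.mul_apply,
            Module.algebraMap_end_apply, map_smul]
          exact Finset.sum_congr rfl fun c hc => by rw [hfactor c hc]
      _ = 0 := by rw [hl, map_zero]
  have hq₀ : q ≠ 0 := fun h => hq (by rw [h, eval_zero])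
  have hinj := ((Module.End.isUnit_iff _).mp (isUnit_aeval_of_spectrum_eq_empty hg hq₀)).injective
  exact hx (hinj (by rw [hqx, map_zero]))

end Resolvent

section Intertwiners

variable {A M N : Type} [Ring A] [Algebra ℂ A] [AddCommGroup M] [Module ℂ M]
  [AddCommGroup N] [Module ℂ N] {ρ : A →ₐ[ℂ] Module.End ℂ M} {σ : A →ₐ[ℂ] Module.End ℂ N}

variable (ρ σ) in
def intertwiners : Submodule ℂ (M →ₗ[ℂ] N) where
  carrier := {f | ∀ a x, f (ρ a x) = σ a (f x)}
  add_mem' hf hg a x := by simp only [LinearMap.add_apply, hf a x, hg a x, map_add]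
  zero_mem' a x := by simp
  smul_mem' c f hf a x := by simp only [LinearMap.smul_apply, hf a x, map_smul]

theorem mem_intertwiners {f : M →ₗ[ℂ] N} :
    f ∈ intertwiners ρ σ ↔ ∀ a x, f (ρ a x) = σ a (f x) :=
  Iff.rfl

theorem AIrred.injective_of_mem_intertwiners (hM : AIrred A M ρ) {f : M →ₗ[ℂ] N}
    (hf : f ∈ intertwiners ρ σ) (hf₀ : f ≠ 0) : Function.Injective f := by
  rw [← LinearMap.ker_eq_bot]
  refine (hM.2 _ fun a x hx => ?_).resolve_right fun h => hf₀ (LinearMap.ker_eq_top.mp h)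
  rw [LinearMap.mem_ker] at hx ⊢
  rw [hf, hx, map_zero]

theorem AIrred.surjective_of_mem_intertwiners (hN : AIrred A N σ) {f : M →ₗ[ℂ] N}
    (hf : f ∈ intertwiners ρ σ) (hf₀ : f ≠ 0) : Function.Surjective f := by
  rw [← LinearMap.range_eq_top]
  refine (hN.2 _ ?_).resolve_left fun h => hf₀ (LinearMap.range_eq_bot.mp h)
  rintro a _ ⟨x, rfl⟩
  exact ⟨ρ a x, hf a x⟩

theorem AIrred.rank_le (hM : AIrred A M ρ) : Module.rank ℂ M ≤ Module.rank ℂ A := by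
  obtain ⟨x, hx⟩ := @exists_ne M hM.1 0
  refine LinearMap.rank_le_of_surjective ((LinearMap.applyₗ x).comp ρ.toLinearMap) ?_
  rw [← LinearMap.range_eq_top]
  refine (hM.2 _ ?_).resolve_left fun h => hx ?_
  · rintro a _ ⟨b, rfl⟩
    exact ⟨a * b, by simp⟩
  · simpa [h] using LinearMap.mem_range_self ((LinearMap.applyₗ x).comp ρ.toLinearMap) 1

theorem CountableDim.rank_le_aleph0 (hA : CountableDim A) : Module.rank ℂ A ≤ ℵ₀ := by
  obtain ⟨ι, _, ⟨b⟩⟩ := hA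
  exact b.mk_eq_rank''.symm.trans_le mk_le_aleph0

/-- Dixmier's version of Schur's lemma: a non-scalar intertwiner `g` would have empty spectrum,
so its resolvents would give `𝔠` independent vectors in a module of countable dimension. -/
theorem AIrred.exists_eq_smul_id_of_countableDim (hM : AIrred A M ρ) (hA : CountableDim A)
    {g : M →ₗ[ℂ] M} (hg : g ∈ intertwiners ρ ρ) : ∃ c : ℂ, g = c • LinearMap.id := by
  by_contra! hc
  obtain ⟨x, hx⟩ := @exists_ne M hM.1 0
  have hspec : spectrum ℂ g = ∅ := by
    refine Set.eq_empty_iff_forall_notMem.mpr fun c hc_spec => hc_spec ?_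
    have hint : algebraMap ℂ _ c - g ∈ intertwiners ρ ρ := sub_mem (fun a x => by simp) hg
    have hne : algebraMap ℂ _ c - g ≠ 0 := fun h =>
      hc c (by rw [← sub_eq_zero.mp h, Module.algebraMap_end_eq_smul_id])
    rw [spectrum.mem_resolventSet_iff, Module.End.isUnit_iff]
    exact ⟨hM.injective_of_mem_intertwiners hint hne, hM.surjective_of_mem_intertwiners hint hne⟩
  have : 𝔠 ≤ ℵ₀ := calc
    𝔠 = #ℂ := mk_complex.symm
    _ ≤ Module.rank ℂ M := (linearIndependent_resolvent_apply hspec hx).cardinal_le_rank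
    _ ≤ Module.rank ℂ A := hM.rank_le
    _ ≤ ℵ₀ := hA.rank_le_aleph0
  exact this.not_gt aleph0_lt_continuum

end Intertwiners

section Density

variable {A M N : Type} {ι : Type*} [Ring A] [Algebra ℂ A] [AddCommGroup M] [Module ℂ M]
  [AddCommGroup N] [Module ℂ N] {ρ : A →ₐ[ℂ] Module.End ℂ M} {σ : A →ₐ[ℂ] Module.End ℂ N}
  {f : ι → M →ₗ[ℂ] N}

theorem mem_span_image_of_range_le
    (hschur : ∀ g ∈ intertwiners ρ ρ, ∃ c : ℂ, g = c • LinearMap.id)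
    (hf : ∀ i, f i ∈ intertwiners ρ σ) {s : Finset ι}
    (hs : ∀ z : ι → M, ∑ i ∈ s, f i (z i) = 0 → ∀ i ∈ s, z i = 0)
    {h : M →ₗ[ℂ] N} (hh : h ∈ intertwiners ρ σ)
    (hrange : LinearMap.range h ≤ LinearMap.range (∑ i ∈ s, f i ∘ₗ LinearMap.proj i)) :
    h ∈ Submodule.span ℂ (f '' s) := by
  set G := ∑ i ∈ s, f i ∘ₗ LinearMap.proj i
  have hG (z : ι → M) : G z = ∑ i ∈ s, f i (z i) := by simp [G]
  obtain ⟨k, hk⟩ := Module.projective_lifting_property G.rangeRestrict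
    (h.codRestrict _ fun y => hrange ⟨y, rfl⟩) G.surjective_rangeRestrict
  have hGk : G ∘ₗ k = h := LinearMap.ext fun y => congrArg Subtype.val (LinearMap.congr_fun hk y)
  -- `k` is determined on the coordinates in `s`, so these coordinates intertwine
  have hk_mem (i : ι) (hi : i ∈ s) : LinearMap.proj i ∘ₗ k ∈ intertwiners ρ ρ := by
    intro a y
    refine sub_eq_zero.mp (hs (fun j => k (ρ a y) j - ρ a (k y j)) ?_ i hi)
    have hGk' (y : M) : ∑ j ∈ s, f j (k y j) = h y := by rw [← hG, ← LinearMap.comp_apply, hGk]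
    simp only [map_sub, Finset.sum_sub_distrib, hGk', hf _ a _, ← map_sum, hh a y, sub_self]
  have hsum : h = ∑ i ∈ s, f i ∘ₗ (LinearMap.proj i ∘ₗ k) := by
    ext y
    simp [← hGk, hG]
  rw [hsum]
  refine Submodule.sum_mem _ fun i hi => ?_
  obtain ⟨c, hc⟩ := hschur _ (hk_mem i hi)
  rw [hc, LinearMap.comp_smul, LinearMap.comp_id]
  exact Submodule.smul_mem _ c (Submodule.subset_span ⟨i, hi, rfl⟩)

theorem eq_zero_of_sum_apply_eq_zero (hM : AIrred A M ρ)
    (hschur : ∀ g ∈ intertwiners ρ ρ, ∃ c : ℂ, g = c • LinearMap.id)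
    (hf : ∀ i, f i ∈ intertwiners ρ σ) (hli : LinearIndependent ℂ f) (s : Finset ι) :
    ∀ x : ι → M, ∑ i ∈ s, f i (x i) = 0 → ∀ i ∈ s, x i = 0 := by
  classical
  induction s using Finset.induction_on with
  | empty => simp
  | insert j s hj ih =>
    intro x hx
    rw [Finset.sum_insert hj] at hx
    set G := ∑ i ∈ s, f i ∘ₗ LinearMap.proj i
    have hG (z : ι → M) : G z = ∑ i ∈ s, f i (z i) := by simp [G]
    -- the `y` for which the other `f i` can cancel `f j y` form an invariant subspace: `0` or `M`
    set W := (LinearMap.range G).comap (f j)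
    have hW : ∀ a, ∀ y ∈ W, ρ a y ∈ W := by
      rintro a y ⟨z, hz⟩
      refine ⟨fun i => ρ a (z i), ?_⟩
      rw [hG, hf j a y, ← hz, hG, map_sum]
      exact Finset.sum_congr rfl fun i _ => hf i a (z i)
    rcases hM.2 W hW with hW | hW
    · have hxj : x j = 0 := by
        have : x j ∈ W := ⟨-x, by simp [hG, eq_neg_of_add_eq_zero_left hx]⟩
        rwa [hW, Submodule.mem_bot] at this
      rw [hxj, map_zero, zero_add] at hx
      intro i hi
      rcases Finset.mem_insert.mp hi with rfl | hi
      · exact hxj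
      · exact ih x hx i hi
    · refine absurd (mem_span_image_of_range_le hschur hf ih (hf j) ?_)
        (hli.notMem_span_image (s := s) (Finset.mem_coe.not.mpr hj))
      rintro _ ⟨y, rfl⟩
      exact (hW ▸ Submodule.mem_top : y ∈ W)

variable (ρ σ) in
def evalTensor : M ⊗[ℂ] intertwiners ρ σ →ₗ[ℂ] N :=
  TensorProduct.lift (LinearMap.applyₗ.compl₂ (intertwiners ρ σ).subtype)

@[simp]
theorem evalTensor_tmul (x : M) (f : intertwiners ρ σ) :
    evalTensor ρ σ (x ⊗ₜ f) = (f : M →ₗ[ℂ] N) x :=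
  rfl

theorem exists_evalTensor_tmul_ne_zero {f : intertwiners ρ σ} (hf : f ≠ 0) :
    ∃ x, evalTensor ρ σ (x ⊗ₜ f) ≠ 0 := by
  by_contra! h
  exact hf (Subtype.ext (LinearMap.ext h))

theorem injective_evalTensor (hM : AIrred A M ρ)
    (hschur : ∀ g ∈ intertwiners ρ ρ, ∃ c : ℂ, g = c • LinearMap.id) :
    Function.Injective (evalTensor ρ σ) := by
  rw [injective_iff_map_eq_zero]
  intro t ht
  let b := Module.Free.chooseBasis ℂ (intertwiners ρ σ)
  obtain ⟨l, rfl⟩ := TensorProduct.eq_repr_basis_right b t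
  have hli : LinearIndependent ℂ fun i => (b i : M →ₗ[ℂ] N) :=
    b.linearIndependent.map' (intertwiners ρ σ).subtype (intertwiners ρ σ).ker_subtype
  have hsum : ∑ i ∈ l.support, (b i : M →ₗ[ℂ] N) (l i) = 0 := by
    rw [← ht, Finsupp.sum, map_sum]
    rfl
  have hl := eq_zero_of_sum_apply_eq_zero hM hschur (fun i => (b i).2) hli l.support l hsum
  have hl₀ : l = 0 := Finsupp.support_eq_empty.mp
    (Finset.eq_empty_of_forall_notMem fun i hi => Finsupp.mem_support_iff.mp hi (hl i hi))
  rw [hl₀, Finsupp.sum_zero_index]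

end Density

theorem eq_top_of_surjective_lTensor_subtype {K M N : Type*} [Field K]
    [AddCommGroup M] [Module K M] [Nontrivial M] [AddCommGroup N] [Module K N] (S : Submodule K N)
    (h : Function.Surjective (S.subtype.lTensor M)) : S = ⊤ := by
  rw [Module.FaithfullyFlat.lTensor_surjective_iff_surjective] at h
  rw [← S.range_subtype, LinearMap.range_eq_top.mpr h]

section TensorDecomposition

open Algebra.TensorProduct (includeLeft)

variable {A₁ A₂ M U : Type} [Ring A₁] [Algebra ℂ A₁] [Ring A₂] [Algebra ℂ A₂]
  [AddCommGroup M] [Module ℂ M] [AddCommGroup U] [Module ℂ U]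
  (ρ : A₁ ⊗[ℂ] A₂ →ₐ[ℂ] Module.End ℂ U) (ρ₁ : A₁ →ₐ[ℂ] Module.End ℂ M)

theorem tmul_one_mul_one_tmul (a : A₁) (b : A₂) :
    ρ (a ⊗ₜ 1) * ρ (1 ⊗ₜ b) = ρ (a ⊗ₜ b) := by
  rw [← map_mul, Algebra.TensorProduct.tmul_mul_tmul, mul_one, one_mul]

theorem one_tmul_mul_tmul_one (a : A₁) (b : A₂) :
    ρ (1 ⊗ₜ b) * ρ (a ⊗ₜ 1) = ρ (a ⊗ₜ b) := by
  rw [← map_mul, Algebra.TensorProduct.tmul_mul_tmul, mul_one, one_mul]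

abbrev multiplicitySpace : Submodule ℂ (M →ₗ[ℂ] U) :=
  intertwiners ρ₁ (ρ.comp includeLeft)

theorem comp_mem_multiplicitySpace (b : A₂) {f : M →ₗ[ℂ] U} (hf : f ∈ multiplicitySpace ρ ρ₁) :
    ρ (1 ⊗ₜ b) ∘ₗ f ∈ multiplicitySpace ρ ρ₁ := by
  rw [mem_intertwiners] at hf ⊢
  intro a x
  simp only [LinearMap.comp_apply, hf a x, AlgHom.comp_apply,
    Algebra.TensorProduct.includeLeft_apply, ← Module.End.mul_apply, tmul_one_mul_one_tmul,
    one_tmul_mul_tmul_one]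

def postcomp (b : A₂) : Module.End ℂ (multiplicitySpace ρ ρ₁) :=
  (LinearMap.compRight ℂ (ρ (1 ⊗ₜ b))).restrict fun _ => comp_mem_multiplicitySpace ρ ρ₁ b

@[simp]
theorem coe_postcomp_apply (b : A₂) (f : multiplicitySpace ρ ρ₁) :
    (postcomp ρ ρ₁ b f : M →ₗ[ℂ] U) = ρ (1 ⊗ₜ b) ∘ₗ f :=
  rfl

def multiplicityAction : A₂ →ₐ[ℂ] Module.End ℂ (multiplicitySpace ρ ρ₁) where
  toFun := postcomp ρ ρ₁
  map_one' := by
    ext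
    simp [← Algebra.TensorProduct.one_def]
  map_mul' b b' := by
    ext
    simp only [Module.End.mul_apply, coe_postcomp_apply, LinearMap.comp_apply]
    rw [← Module.End.mul_apply, ← map_mul, Algebra.TensorProduct.tmul_mul_tmul, one_mul]
  map_zero' := by
    ext
    simp
  map_add' b b' := by
    ext
    simp [TensorProduct.tmul_add]
  commutes' c := by
    ext
    simp [Algebra.algebraMap_eq_smul_one, TensorProduct.tmul_smul, ← Algebra.TensorProduct.one_def]

@[simp]
theorem multiplicityAction_apply (b : A₂) (f : multiplicitySpace ρ ρ₁) :
    (multiplicityAction ρ ρ₁ b f : M →ₗ[ℂ] U) = ρ (1 ⊗ₜ b) ∘ₗ f :=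
  rfl

def tensorRep : A₁ ⊗[ℂ] A₂ →ₐ[ℂ] Module.End ℂ (M ⊗[ℂ] multiplicitySpace ρ ρ₁) :=
  Module.endTensorEndAlgHom.comp (Algebra.TensorProduct.map ρ₁ (multiplicityAction ρ ρ₁))

theorem tensorRep_tmul (a : A₁) (b : A₂) :
    tensorRep ρ ρ₁ (a ⊗ₜ b) = TensorProduct.map (ρ₁ a) (multiplicityAction ρ ρ₁ b) :=
  TensorProduct.ext' fun _ _ => rfl

theorem evalTensor_comp_tensorRep (z : A₁ ⊗[ℂ] A₂) :
    evalTensor ρ₁ (ρ.comp includeLeft) ∘ₗ tensorRep ρ ρ₁ z =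
      ρ z ∘ₗ evalTensor ρ₁ (ρ.comp includeLeft) := by
  induction z using TensorProduct.induction_on with
  | zero => simp
  | tmul a b =>
    refine TensorProduct.ext' fun x f => ?_
    simp only [LinearMap.comp_apply, tensorRep_tmul, TensorProduct.map_tmul, evalTensor_tmul,
      multiplicityAction_apply, f.2 a x, AlgHom.comp_apply, Algebra.TensorProduct.includeLeft_apply,
      ← Module.End.mul_apply, one_tmul_mul_tmul_one]
  | add z z' hz hz' => simp only [map_add, LinearMap.comp_add, LinearMap.add_comp, hz, hz']

theorem tensorRep_mem_range_lTensor {S : Submodule ℂ (multiplicitySpace ρ ρ₁)}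
    (hS : ∀ b, ∀ f ∈ S, multiplicityAction ρ ρ₁ b f ∈ S) (z : A₁ ⊗[ℂ] A₂) :
    ∀ t ∈ LinearMap.range (S.subtype.lTensor M),
      tensorRep ρ ρ₁ z t ∈ LinearMap.range (S.subtype.lTensor M) := by
  induction z using TensorProduct.induction_on with
  | zero => simp
  | tmul a b =>
    rintro _ ⟨t, rfl⟩
    refine ⟨TensorProduct.map (ρ₁ a) ((multiplicityAction ρ ρ₁ b).restrict (hS b)) t, ?_⟩
    induction t using TensorProduct.induction_on with
    | zero => simp
    | tmul x f => rfl
    | add t t' ht ht' => simp only [map_add, ht, ht']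
  | add z z' hz hz' =>
    intro t ht
    rw [map_add, LinearMap.add_apply]
    exact add_mem (hz t ht) (hz' t ht)

variable {ρ ρ₁}

theorem range_evalTensor_comp_lTensor_eq_top (hU : AIrred (A₁ ⊗[ℂ] A₂) U ρ)
    {S : Submodule ℂ (multiplicitySpace ρ ρ₁)}
    (hS : ∀ b, ∀ f ∈ S, multiplicityAction ρ ρ₁ b f ∈ S) (hS₀ : S ≠ ⊥) :
    LinearMap.range (evalTensor ρ₁ (ρ.comp includeLeft) ∘ₗ S.subtype.lTensor M) = ⊤ := by
  refine (hU.2 _ ?_).resolve_left fun h => ?_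
  · rintro z _ ⟨t, rfl⟩
    obtain ⟨t', ht'⟩ := tensorRep_mem_range_lTensor ρ ρ₁ hS z _ ⟨t, rfl⟩
    refine ⟨t', ?_⟩
    rw [LinearMap.comp_apply, ht', ← LinearMap.comp_apply, evalTensor_comp_tensorRep,
      LinearMap.comp_apply, LinearMap.comp_apply]
  · obtain ⟨f, hfS, hf⟩ := Submodule.exists_mem_ne_zero_of_ne_bot hS₀
    obtain ⟨x, hx⟩ := exists_evalTensor_tmul_ne_zero hf
    refine hx ?_
    simpa [h] using LinearMap.mem_range_self
      (evalTensor ρ₁ _ ∘ₗ S.subtype.lTensor M) (x ⊗ₜ ⟨f, hfS⟩)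

theorem bijective_evalTensor (hU : AIrred (A₁ ⊗[ℂ] A₂) U ρ) (hM : AIrred A₁ M ρ₁)
    (hschur : ∀ g ∈ intertwiners ρ₁ ρ₁, ∃ c : ℂ, g = c • LinearMap.id)
    [Nontrivial (multiplicitySpace ρ ρ₁)] :
    Function.Bijective (evalTensor ρ₁ (ρ.comp includeLeft)) := by
  refine ⟨injective_evalTensor hM hschur, ?_⟩
  have htop := range_evalTensor_comp_lTensor_eq_top hU
    (S := (⊤ : Submodule ℂ (multiplicitySpace ρ ρ₁))) (fun _ _ _ => trivial) top_ne_bot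
  rw [← LinearMap.range_eq_top, eq_top_iff, ← htop]
  exact LinearMap.range_comp_le_range _ _

theorem aIrred_multiplicityAction (hU : AIrred (A₁ ⊗[ℂ] A₂) U ρ) (hM : AIrred A₁ M ρ₁)
    (hschur : ∀ g ∈ intertwiners ρ₁ ρ₁, ∃ c : ℂ, g = c • LinearMap.id)
    [Nontrivial (multiplicitySpace ρ ρ₁)] :
    AIrred A₂ (multiplicitySpace ρ ρ₁) (multiplicityAction ρ ρ₁) := by
  refine ⟨inferInstance, fun S hS => or_iff_not_imp_left.mpr fun hS₀ => ?_⟩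
  have : Nontrivial M := hM.1
  have hrange := range_evalTensor_comp_lTensor_eq_top hU hS hS₀
  refine eq_top_of_surjective_lTensor_subtype (M := M) S fun t => ?_
  obtain ⟨t', ht'⟩ := LinearMap.range_eq_top.mp hrange (evalTensor ρ₁ _ t)
  exact ⟨t', (injective_evalTensor hM hschur) ht'⟩

theorem exists_linearEquiv_tensor_multiplicitySpace (hU : AIrred (A₁ ⊗[ℂ] A₂) U ρ)
    (hM : AIrred A₁ M ρ₁)
    (hschur : ∀ g ∈ intertwiners ρ₁ ρ₁, ∃ c : ℂ, g = c • LinearMap.id)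
    [Nontrivial (multiplicitySpace ρ ρ₁)] :
    ∃ Φ : U ≃ₗ[ℂ] M ⊗[ℂ] multiplicitySpace ρ ρ₁,
      ∀ z x, Φ (ρ z x) = tensorRep ρ ρ₁ z (Φ x) := by
  let E := LinearEquiv.ofBijective _ (bijective_evalTensor hU hM hschur)
  have hE (t) : E t = evalTensor ρ₁ (ρ.comp includeLeft) t := rfl
  refine ⟨E.symm, fun z x => E.injective ?_⟩
  rw [LinearEquiv.apply_symm_apply, hE, ← LinearMap.comp_apply, evalTensor_comp_tensorRep,
    LinearMap.comp_apply, ← hE, LinearEquiv.apply_symm_apply]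

end TensorDecomposition

theorem aIrred_of_minimal {A U : Type} [Ring A] [Algebra ℂ A] [AddCommGroup U] [Module ℂ U]
    {σ : A →ₐ[ℂ] Module.End ℂ U} {U₁ : Submodule ℂ U} (hne : U₁ ≠ ⊥)
    (hmin : ∀ S : Submodule ℂ U, S ≤ U₁ → (∀ a, ∀ x ∈ S, σ a x ∈ S) → S = ⊥ ∨ S = U₁)
    {ρ₁ : A →ₐ[ℂ] Module.End ℂ U₁} (hρ₁ : ∀ a x, (ρ₁ a x : U) = σ a x) : AIrred A U₁ ρ₁ := by
  refine ⟨Submodule.nontrivial_iff_ne_bot.mpr hne, fun S hS => ?_⟩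
  have hmap : ∀ a, ∀ x ∈ S.map U₁.subtype, σ a x ∈ S.map U₁.subtype := by
    rintro a _ ⟨x, hx, rfl⟩
    exact ⟨ρ₁ a x, hS a x hx, hρ₁ a x⟩
  refine (hmin _ (Submodule.map_subtype_le U₁ S) hmap).imp (fun h => ?_) fun h => ?_
  · exact Submodule.map_injective_of_injective U₁.injective_subtype (by rw [h, Submodule.map_bot])
  · exact Submodule.map_injective_of_injective U₁.injective_subtype
      (by rw [h, Submodule.map_subtype_top])

/-- If `U` is an irreducible `A₁ ⊗ A₂`-module which, as an
`A₁`-module (via `a₁ ↦ a₁ ⊗ 1`), has an irreducible submodule `U₁`, and either `A₁`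
has countable dimension over `ℂ` or every `A₁`-endomorphism of `U₁` is a scalar, then
`U ≅ U₁ ⊗ U₂` as `A₁ ⊗ A₂`-modules for some irreducible `A₂`-module `U₂`. -/
theorem statement11
    (A₁ A₂ : Type) [Ring A₁] [Algebra ℂ A₁] [Ring A₂] [Algebra ℂ A₂]
    (U : Type) [AddCommGroup U] [Module ℂ U]
    (ρ : A₁ ⊗[ℂ] A₂ →ₐ[ℂ] Module.End ℂ U)
    (hirr : AIrred (A₁ ⊗[ℂ] A₂) U ρ)
    (U₁ : Submodule ℂ U)
    (hinv : ∀ a₁ : A₁, ∀ x ∈ U₁, ρ (a₁ ⊗ₜ[ℂ] (1 : A₂)) x ∈ U₁)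
    (hne : U₁ ≠ ⊥)
    (hmin : ∀ S : Submodule ℂ U, S ≤ U₁ →
      (∀ a₁ : A₁, ∀ x ∈ S, ρ (a₁ ⊗ₜ[ℂ] (1 : A₂)) x ∈ S) → S = ⊥ ∨ S = U₁)
    (hyp : CountableDim A₁ ∨
      (∀ f : ↥U₁ →ₗ[ℂ] ↥U₁,
        (∀ (a₁ : A₁) (x : ↥U₁),
          (↑(f ⟨ρ (a₁ ⊗ₜ[ℂ] (1 : A₂)) ↑x, hinv a₁ ↑x x.2⟩) : U) =
            ρ (a₁ ⊗ₜ[ℂ] (1 : A₂)) ↑(f x)) →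
        ∃ c : ℂ, f = c • LinearMap.id)) :
    ∀ ρ₁' : A₁ →ₐ[ℂ] Module.End ℂ ↥U₁,
      (∀ (a₁ : A₁) (x : ↥U₁), (↑(ρ₁' a₁ x) : U) = ρ (a₁ ⊗ₜ[ℂ] (1 : A₂)) ↑x) →
      ∃ (U₂ : ModuleCat ℂ) (ρ₂ : A₂ →ₐ[ℂ] Module.End ℂ U₂),
        AIrred A₂ U₂ ρ₂ ∧
        ∃ ρT : A₁ ⊗[ℂ] A₂ →ₐ[ℂ] Module.End ℂ (↥U₁ ⊗[ℂ] U₂),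
          (∀ (a₁ : A₁) (a₂ : A₂),
            ρT (a₁ ⊗ₜ[ℂ] a₂) = TensorProduct.map (ρ₁' a₁) (ρ₂ a₂)) ∧
          ∃ Φ : U ≃ₗ[ℂ] (↥U₁ ⊗[ℂ] U₂),
            ∀ (z : A₁ ⊗[ℂ] A₂) (x : U), Φ (ρ z x) = ρT z (Φ x) := by
  intro ρ₁ hρ₁
  have hU₁ : AIrred A₁ U₁ ρ₁ :=
    aIrred_of_minimal (σ := ρ.comp Algebra.TensorProduct.includeLeft) hne hmin hρ₁
  have hschur : ∀ g ∈ intertwiners ρ₁ ρ₁, ∃ c : ℂ, g = c • LinearMap.id := by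
    rcases hyp with hA | hyp
    · exact fun g hg => hU₁.exists_eq_smul_id_of_countableDim hA hg
    · refine fun g hg => hyp g fun a x => ?_
      rw [show (⟨_, hinv a x x.2⟩ : U₁) = ρ₁ a x from Subtype.ext (hρ₁ a x).symm, hg a x, hρ₁]
  have hsubtype : U₁.subtype ≠ 0 := fun h =>
    hne (by rw [← U₁.range_subtype, h, LinearMap.range_zero])
  have : Nontrivial (multiplicitySpace ρ ρ₁) :=
    ⟨⟨U₁.subtype, hρ₁⟩, 0, fun h => hsubtype (congrArg Subtype.val h)⟩
  exact ⟨ModuleCat.of ℂ (multiplicitySpace ρ ρ₁), multiplicityAction ρ ρ₁,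
    aIrred_multiplicityAction hirr hU₁ hschur, tensorRep ρ ρ₁, tensorRep_tmul ρ ρ₁,
    exists_linearEquiv_tensor_multiplicitySpace hirr hU₁ hschur⟩

end Twisted
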